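/- arXiv:1909.06915 — 5 statements merged into one kernel-verified Lean document; each statement's English description precedes it below -/
import Mathlib

section
/- Let p be a prime, p ≡ 1 (mod 6), and let q be a square root of −3 modulo p. The map ψ(a+bω) = (a − 2^{-1}b(q+1), a − 2^{-1}b(1−q)) defines a ring (hence group) isomorphism from Z_p[ω]^× onto Z_p^× × Z_p^×. -/
/-!
Since `q² = -3` and `2` is invertible, `x² + x + 1` splits over `ℤ/p` as `(x - r)(x - s)` with
`r = -(q + 1)/2` and `s = (q - 1)/2`. The roots differ by the unit `-q`, so the two linear factors
are comaximal and the Chinese remainder theorem identifies `(ℤ/p)[x]/(x² + x + 1)` with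
`ℤ/p × ℤ/p` via `f ↦ (f(r), f(s))`; on `a + bx` this is exactly `ψ`.
-/

open Polynomial

/-- The ring of Eisenstein integers modulo `n`: `(ℤ/n)[x]/(x² + x + 1)`. -/
abbrev EisensteinMod (n : ℕ) : Type :=
  Polynomial (ZMod n) ⧸ Ideal.span {(X ^ 2 + X + 1 : Polynomial (ZMod n))}

section
variable {R : Type*} [CommRing R]

noncomputable def quotientSpanMulXSubCEquivProd {r s : R} (h : IsUnit (r - s)) :
    R[X] ⧸ Ideal.span {(X - C r) * (X - C s)} ≃+* R × R :=
  (Ideal.quotEquivOfEq (Ideal.span_singleton_mul_span_singleton _ _).symm).trans <|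
    (Ideal.quotientMulEquivQuotientProd _ _
      ((Ideal.isCoprime_span_singleton_iff _ _).2 (isCoprime_X_sub_C_of_isUnit_sub h))).trans <|
    RingEquiv.prodCongr (quotientSpanXSubCAlgEquiv r).toRingEquiv
      (quotientSpanXSubCAlgEquiv s).toRingEquiv

theorem quotientSpanMulXSubCEquivProd_mk {r s : R} (h : IsUnit (r - s)) (f : R[X]) :
    quotientSpanMulXSubCEquivProd h (Ideal.Quotient.mk _ f) = (f.eval r, f.eval s) := by
  ext <;> simp [quotientSpanMulXSubCEquivProd, Ideal.quotientMulEquivQuotientProd_fst,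
    Ideal.quotientMulEquivQuotientProd_snd]

theorem X_sq_add_X_add_one_eq_mul {t q : R} (ht : 2 * t = 1) (hq : q ^ 2 = -3) :
    (X ^ 2 + X + 1 : R[X]) = (X - C (-(t * (q + 1)))) * (X - C (t * (q - 1))) := by
  have ht' : 2 * C t = 1 := by rw [← map_ofNat C 2, ← map_mul, ht, map_one]
  have hq' : C q ^ 2 = -3 := by rw [← map_pow, hq, map_neg, map_ofNat]
  simp only [map_neg, map_mul, map_add, map_sub, map_one]
  linear_combination (-X - 2 * C t - 1) * ht' + C t ^ 2 * hq'

end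

theorem eisenstein_psi_iso_general (p : ℕ) (h : p % 6 = 1)
    (q : ZMod p) (hq : q ^ 2 = -3) :
    ∃ e : EisensteinMod p ≃+* ZMod p × ZMod p,
      ∀ a b : ZMod p,
        e (Ideal.Quotient.mk _ (C a + C b * X)) =
          (a - 2⁻¹ * b * (q + 1), a - 2⁻¹ * b * (1 - q)) := by
  have h2 : (2 : ZMod p) * 2⁻¹ = 1 := ZMod.mul_inv_of_unit _ <| by
    exact_mod_cast (ZMod.isUnit_iff_coprime 2 p).2 <|
      Nat.coprime_two_left.2 <| Nat.odd_iff.2 (by omega)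
  have h3 : IsUnit (3 : ZMod p) := by
    exact_mod_cast (ZMod.isUnit_iff_coprime 3 p).2 <|
      (Nat.Prime.coprime_iff_not_dvd Nat.prime_three).2 (by omega)
  have hq_unit : IsUnit q := (isUnit_pow_iff two_ne_zero).1 (hq ▸ h3.neg)
  have hsub : -(2⁻¹ * (q + 1)) - 2⁻¹ * (q - 1) = -q := by linear_combination (-q) * h2
  have hunit : IsUnit (-(2⁻¹ * (q + 1)) - 2⁻¹ * (q - 1)) := hsub ▸ hq_unit.neg
  have hfactor := congrArg (fun f => Ideal.span {f}) (X_sq_add_X_add_one_eq_mul h2 hq)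
  refine ⟨(Ideal.quotEquivOfEq hfactor).trans (quotientSpanMulXSubCEquivProd hunit),
    fun a b => ?_⟩
  rw [RingEquiv.trans_apply, Ideal.quotEquivOfEq_mk, quotientSpanMulXSubCEquivProd_mk]
  simp only [eval_add, eval_C, eval_mul, eval_X]
  congr 1 <;> ring

theorem eisenstein_psi_iso (p : ℕ) (hp : p.Prime) (h : p % 6 = 1)
    (q : ZMod p) (hq : q ^ 2 = -3) :
    ∃ e : EisensteinMod p ≃+* ZMod p × ZMod p,
      ∀ a b : ZMod p,
        e (Ideal.Quotient.mk _ (C a + C b * X)) =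
          (a - 2⁻¹ * b * (q + 1), a - 2⁻¹ * b * (1 - q)) :=
  eisenstein_psi_iso_general p h q hq
end

section
/- For m ≥ 5, the number of elements x of Z_{2^m}[ω] satisfying x⁴ = 1 is at most 32. -/
open Polynomial

/-!
Every fourth root of unity `x` of `R = (ℤ/2^m)[ω]` is `≡ ±1 (mod 8)`: this only depends on `x`
modulo `32`, where it is a finite check. If `x = 1 + 8w`, then
`x⁴ - 1 = 32w(1 + 2(6w + 32w² + 64w³))`, and the second factor is a unit because `2` is nilpotent
in `R`; so `32w = 0`, i.e. `4(x - 1) = 0`, and likewise for `-x`. Hence the fourth roots of unity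
lie in `±1 + R[4]`, and the `4`-torsion `R[4] ≅ (ℤ/4)²` has `16` elements.
-/

open AdjoinRoot

section TwoNilpotent

variable {R : Type*} [CommRing R]

theorem thirtyTwo_mul_eq_zero_of_one_add_eight_mul_pow_four_eq_one (h2 : IsNilpotent (2 : R)) {w : R}
    (hw : (1 + 8 * w) ^ 4 = 1) : 32 * w = 0 := by
  have hu : IsUnit (1 + 2 * (6 * w + 32 * w ^ 2 + 64 * w ^ 3)) :=
    ((Commute.all _ _).isNilpotent_mul_right h2).isUnit_one_add
  exact hu.mul_left_eq_zero.mp (by linear_combination hw)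

theorem nsmul_sub_one_eq_zero_or_nsmul_add_one_eq_zero (h2 : IsNilpotent (2 : R)) {x : R}
    (hx : x ^ 4 = 1) (h8 : 8 ∣ x - 1 ∨ 8 ∣ x + 1) : 4 • (x - 1) = 0 ∨ 4 • (x + 1) = 0 := by
  simp only [nsmul_eq_mul, Nat.cast_ofNat]
  rcases h8 with ⟨w, hw⟩ | ⟨w, hw⟩
  · left
    rw [sub_eq_iff_eq_add'] at hw
    subst hw
    linear_combination thirtyTwo_mul_eq_zero_of_one_add_eight_mul_pow_four_eq_one h2 hx
  · right
    have hw' : (1 + 8 * -w) ^ 4 = 1 := by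
      rw [show 1 + 8 * -w = -x by linear_combination hw, ← hx]
      ring
    linear_combination 4 * hw - thirtyTwo_mul_eq_zero_of_one_add_eight_mul_pow_four_eq_one h2 hw'

end TwoNilpotent

theorem card_pi_nsmul_eq_zero_le {ι G : Type*} [Fintype ι] [AddGroup G] [Finite G] [IsAddCyclic G]
    {n : ℕ} (hn : 0 < n) : Nat.card {v : ι → G // n • v = 0} ≤ n ^ Fintype.card ι := by
  classical
  have : Fintype G := Fintype.ofFinite G
  have hG : Nat.card {g : G // n • g = 0} ≤ n := by
    simpa [Nat.card_eq_fintype_card, Fintype.card_subtype] using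
      IsAddCyclic.card_nsmul_eq_zero_le (α := G) hn
  calc Nat.card {v : ι → G // n • v = 0}
      = Nat.card (ι → {g : G // n • g = 0}) :=
        Nat.card_congr <| (Equiv.subtypeEquivRight (q := fun v : ι → G => ∀ i, n • v i = 0)
          fun v => funext_iff).trans (Equiv.subtypePiEquivPi (p := fun _ g => n • g = 0))
    _ ≤ n ^ Fintype.card ι := by
      rw [Nat.card_pi]
      exact Finset.prod_le_pow_card _ _ _ fun _ _ => hG

theorem Module.Basis.card_nsmul_eq_zero_le {ι M : Type*} [Fintype ι] [AddCommGroup M] {k : ℕ}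
    [NeZero k] [Module (ZMod k) M] (b : Basis ι (ZMod k) M) {n : ℕ} (hn : 0 < n) :
    Nat.card {x : M // n • x = 0} ≤ n ^ Fintype.card ι :=
  calc Nat.card {x : M // n • x = 0} = Nat.card {v : ι → ZMod k // n • v = 0} :=
        Nat.card_congr <| b.equivFun.toEquiv.subtypeEquiv fun x => by
          simp only [LinearEquiv.coe_toEquiv, ← map_nsmul, LinearEquiv.map_eq_zero_iff]
    _ ≤ n ^ Fintype.card ι := card_pi_nsmul_eq_zero_le hn

theorem card_le_two_mul_card_nsmul_eq_zero {A : Type*} [AddCommGroup A] [Finite A] {p : A → Prop}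
    (a : A) (n : ℕ) (h : ∀ x, p x → n • (x - a) = 0 ∨ n • (x + a) = 0) :
    Nat.card {x // p x} ≤ 2 * Nat.card {y : A // n • y = 0} := by
  set T := {y : A | n • y = 0}
  have hsub : {x | p x} ⊆ (· + a) '' T ∪ (· - a) '' T := by
    intro x hx
    rcases h x hx with hx' | hx'
    · exact Or.inl ⟨x - a, hx', sub_add_cancel x a⟩
    · exact Or.inr ⟨x + a, hx', add_sub_cancel_right x a⟩
  calc Nat.card {x // p x} = {x | p x}.ncard := Nat.card_coe_set_eq _
    _ ≤ ((· + a) '' T ∪ (· - a) '' T).ncard := Set.ncard_le_ncard hsub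
    _ ≤ ((· + a) '' T).ncard + ((· - a) '' T).ncard := Set.ncard_union_le _ _
    _ ≤ T.ncard + T.ncard := add_le_add Set.ncard_image_le Set.ncard_image_le
    _ = 2 * Nat.card {y : A // n • y = 0} := by rw [← two_mul]; rfl

section Eisenstein

variable {R : Type*} [CommRing R]

theorem monic_X_sq_add_X_add_one : (X ^ 2 + X + 1 : R[X]).Monic := by
  monicity!

theorem root_sq_add_root_add_one : root (X ^ 2 + X + 1 : R[X]) ^ 2 + root _ + 1 = 0 := by
  have h := eval₂_root (X ^ 2 + X + 1 : R[X])
  simpa only [eval₂_add, eval₂_X_pow, eval₂_X, eval₂_one] using h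

def coordSq (p : R × R) : R × R :=
  (p.1 ^ 2 - p.2 ^ 2, 2 * p.1 * p.2 - p.2 ^ 2)

theorem map_coordSq {S : Type*} [CommRing S] (f : R →+* S) (p : R × R) :
    Prod.map f f (coordSq p) = coordSq (Prod.map f f p) := by
  simp [coordSq, map_ofNat]

theorem of_add_of_mul_root_sq (p : R × R) :
    (of (X ^ 2 + X + 1 : R[X]) p.1 + of _ p.2 * root _) ^ 2
      = of _ (coordSq p).1 + of _ (coordSq p).2 * root _ := by
  simp only [coordSq, map_sub, map_mul, map_pow, map_ofNat]
  linear_combination (of (X ^ 2 + X + 1 : R[X]) p.2) ^ 2 * root_sq_add_root_add_one (R := R)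

variable [Nontrivial R]

theorem natDegree_X_sq_add_X_add_one : (X ^ 2 + X + 1 : R[X]).natDegree = 2 := by
  compute_degree!

noncomputable def eisensteinBasis : Module.Basis (Fin 2) R (AdjoinRoot (X ^ 2 + X + 1 : R[X])) :=
  (powerBasis' monic_X_sq_add_X_add_one).basis.reindex (finCongr natDegree_X_sq_add_X_add_one)

theorem coe_eisensteinBasis : ⇑(eisensteinBasis (R := R)) = ![1, root _] := by
  ext i
  simp only [eisensteinBasis, Module.Basis.coe_reindex, PowerBasis.coe_basis, powerBasis'_gen,
    Function.comp_apply]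
  fin_cases i
  · exact pow_zero _
  · exact pow_one _

theorem exists_eq_of_add_of_mul_root (x : AdjoinRoot (X ^ 2 + X + 1 : R[X])) :
    ∃ p : R × R, x = of _ p.1 + of _ p.2 * root _ := by
  refine ⟨(eisensteinBasis.repr x 0, eisensteinBasis.repr x 1), ?_⟩
  conv_lhs => rw [← eisensteinBasis.sum_repr x]
  simp [Fin.sum_univ_two, coe_eisensteinBasis, Algebra.smul_def]

theorem of_add_of_mul_root_eq_zero {a b : R}
    (h : of (X ^ 2 + X + 1 : R[X]) a + of _ b * root _ = 0) : a = 0 ∧ b = 0 := by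
  have hli := eisensteinBasis.linearIndependent (R := R)
  rw [coe_eisensteinBasis, LinearIndependent.pair_iff] at hli
  exact hli a b (by simpa [Algebra.smul_def] using h)

theorem coordSq_coordSq_eq_of_pow_four_eq_one {p : R × R}
    (hx : (of (X ^ 2 + X + 1 : R[X]) p.1 + of _ p.2 * root _) ^ 4 = 1) :
    coordSq (coordSq p) = (1, 0) := by
  rw [show ∀ y : AdjoinRoot (X ^ 2 + X + 1 : R[X]), y ^ 4 = (y ^ 2) ^ 2 from fun y => by ring,
    of_add_of_mul_root_sq, of_add_of_mul_root_sq] at hx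
  obtain ⟨h1, h2⟩ := of_add_of_mul_root_eq_zero
    (a := (coordSq (coordSq p)).1 - 1) (b := (coordSq (coordSq p)).2)
    (by rw [map_sub, map_one]; linear_combination hx)
  exact Prod.ext (sub_eq_zero.mp h1) h2

end Eisenstein

theorem ZMod.exists_eq_mul_of_castHom_eq_zero {d k : ℕ} (hdk : d ∣ k) {c : ZMod k}
    (hc : ZMod.castHom hdk (ZMod d) c = 0) : ∃ w, c = d * w := by
  rw [← ZMod.intCast_zmod_cast c, map_intCast, ZMod.intCast_zmod_eq_zero_iff_dvd] at hc
  obtain ⟨t, ht⟩ := hc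
  exact ⟨t, by rw [← ZMod.intCast_zmod_cast c, ht]; push_cast; rfl⟩

theorem natCast_dvd_of_add_of_mul_root {d k : ℕ} (hdk : d ∣ k) {a b : ZMod k}
    (ha : ZMod.castHom hdk (ZMod d) a = 0) (hb : ZMod.castHom hdk (ZMod d) b = 0) :
    (d : AdjoinRoot (X ^ 2 + X + 1 : (ZMod k)[X])) ∣ of _ a + of _ b * root _ := by
  obtain ⟨a, rfl⟩ := ZMod.exists_eq_mul_of_castHom_eq_zero hdk ha
  obtain ⟨b, rfl⟩ := ZMod.exists_eq_mul_of_castHom_eq_zero hdk hb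
  exact ⟨of _ a + of _ b * root _, by simp only [map_mul, map_natCast]; ring⟩

theorem castHom_eight_of_coordSq_coordSq_eq_one_zero : ∀ p : ZMod 32 × ZMod 32,
    coordSq (coordSq p) = (1, 0) →
      ZMod.castHom (by norm_num : 8 ∣ 32) (ZMod 8) p.2 = 0 ∧
        (ZMod.castHom (by norm_num : 8 ∣ 32) (ZMod 8) p.1 = 1 ∨
          ZMod.castHom (by norm_num : 8 ∣ 32) (ZMod 8) p.1 = -1) := by
  decide +kernel

theorem dvd_sub_one_or_dvd_add_one_of_pow_four_eq_one {k : ℕ} (hk : 32 ∣ k)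
    {x : AdjoinRoot (X ^ 2 + X + 1 : (ZMod k)[X])} (hx : x ^ 4 = 1) : 8 ∣ x - 1 ∨ 8 ∣ x + 1 := by
  have : Nontrivial (ZMod k) := ZMod.nontrivial_iff.mpr (by rintro rfl; norm_num at hk)
  obtain ⟨p, rfl⟩ := exists_eq_of_add_of_mul_root x
  obtain ⟨hb, ha⟩ := castHom_eight_of_coordSq_coordSq_eq_one_zero
    (Prod.map (ZMod.castHom hk (ZMod 32)) (ZMod.castHom hk (ZMod 32)) p)
    (by rw [← map_coordSq, ← map_coordSq, coordSq_coordSq_eq_of_pow_four_eq_one hx,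
      Prod.map_apply, map_one, map_zero])
  simp only [Prod.map_fst, Prod.map_snd, ← RingHom.comp_apply, ZMod.castHom_comp] at hb ha
  rcases ha with ha | ha
  · left
    have h := natCast_dvd_of_add_of_mul_root _ (a := p.1 - 1)
      (by rw [map_sub, ha, map_one, sub_self]) hb
    rwa [map_sub, map_one, sub_add_eq_add_sub, Nat.cast_ofNat] at h
  · right
    have h := natCast_dvd_of_add_of_mul_root _ (a := p.1 + 1)
      (by rw [map_add, ha, map_one, neg_add_cancel]) hb
    rwa [map_add, map_one, add_right_comm (of _ p.1), Nat.cast_ofNat] at h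

theorem eisenstein_fourth_root_count (m : ℕ) (hm : 5 ≤ m) :
    Nat.card {x : EisensteinMod (2 ^ m) // x ^ 4 = 1} ≤ 32 := by
  change Nat.card {x : AdjoinRoot (X ^ 2 + X + 1 : (ZMod (2 ^ m))[X]) // x ^ 4 = 1} ≤ 32
  have h32 : 32 ∣ 2 ^ m := pow_dvd_pow 2 hm
  have : Fact (1 < 2 ^ m) := ⟨Nat.one_lt_two_pow (by omega)⟩
  have : Module.Finite (ZMod (2 ^ m)) (AdjoinRoot (X ^ 2 + X + 1 : (ZMod (2 ^ m))[X])) :=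
    Module.Finite.of_basis eisensteinBasis
  have : Finite (AdjoinRoot (X ^ 2 + X + 1 : (ZMod (2 ^ m))[X])) :=
    Module.finite_of_finite (ZMod (2 ^ m))
  have h2 : IsNilpotent (2 : AdjoinRoot (X ^ 2 + X + 1 : (ZMod (2 ^ m))[X])) := by
    have h : IsNilpotent (2 : ZMod (2 ^ m)) := ⟨m, by exact_mod_cast ZMod.natCast_self (2 ^ m)⟩
    have h' := h.map (of (X ^ 2 + X + 1 : (ZMod (2 ^ m))[X]))
    rwa [map_ofNat] at h'
  calc _ ≤ 2 * Nat.card {y : AdjoinRoot (X ^ 2 + X + 1 : (ZMod (2 ^ m))[X]) // 4 • y = 0} :=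
        card_le_two_mul_card_nsmul_eq_zero 1 4 fun x hx =>
          nsmul_sub_one_eq_zero_or_nsmul_add_one_eq_zero h2 hx
            (dvd_sub_one_or_dvd_add_one_of_pow_four_eq_one h32 hx)
    _ ≤ 2 * 4 ^ 2 := by
        gcongr
        simpa using Module.Basis.card_nsmul_eq_zero_le
          (M := AdjoinRoot (X ^ 2 + X + 1 : (ZMod (2 ^ m))[X])) eisensteinBasis (by norm_num : 0 < 4)
end

section
/- For m ≥ 3, the unit group of Z_{2^m}[ω] is isomorphic to Z_3 × Z_{2^{m−1}} × Z_{2^{m−2}} × Z_2. -/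
open Polynomial

/-!
The units `ω`, `1 + 2ω`, `1 + 4ω` and `-1` have orders `3`, `2^(m-1)`, `2^(m-2)` and `2`:
`(1 + 2ω)² = -3 = 1 + 4·(-1)`, and `(1 + 4a)^(2^(m-3)) = 1 + 2^(m-1)·a` whenever `2^m = 0`.
They define a homomorphism `ℤ/3 × ℤ/2^(m-1) × ℤ/2^(m-2) × ℤ/2 → (ℤ/2^m[ω])ˣ`, which is injective
because it is injective on elements of prime order: those of order `3` go to `ω` or `ω²`, and
those of order `2` go to `±(1 - 2^(m-1)·a + 2^(m-1)·b·ω)` with `a, b ∈ {0, 1}`, which is `1` only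
for the trivial element. Finally `a + bω` is a unit iff `a` or `b` is odd, so there are
`4^m - 4^(m-1) = 3·4^(m-1)` units, as many as elements of the source.
-/

section CommRing
variable {A : Type*} [CommRing A]

theorem one_add_pow_eq_of_sq_eq_zero {x : A} (hx : x ^ 2 = 0) (k : ℕ) :
    (1 + x) ^ k = 1 + k * x := by
  induction k with
  | zero => simp
  | succ k ih => rw [pow_succ, ih]; push_cast; linear_combination (k : A) * hx

theorem exists_one_add_four_mul_pow_two_pow (a : A) (k : ℕ) :
    ∃ r : A, (1 + 4 * a) ^ 2 ^ k = 1 + 2 ^ (k + 2) * a + 2 ^ (k + 3) * r := by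
  induction k with
  | zero => exact ⟨0, by ring⟩
  | succ k ih =>
    obtain ⟨r, hr⟩ := ih
    refine ⟨r + 2 ^ k * (a + 2 * r) ^ 2, ?_⟩
    rw [pow_succ, pow_mul, hr]
    ring

theorem one_add_four_mul_pow_two_pow {n : ℕ} (h2 : (2 : A) ^ (n + 3) = 0) (a : A) :
    (1 + 4 * a) ^ 2 ^ n = 1 + 2 ^ (n + 2) * a := by
  obtain ⟨r, hr⟩ := exists_one_add_four_mul_pow_two_pow a n
  rw [hr, h2, zero_mul, add_zero]

theorem one_add_four_mul_pow_two_pow_succ {n : ℕ} (h2 : (2 : A) ^ (n + 3) = 0) (a : A) :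
    (1 + 4 * a) ^ 2 ^ (n + 1) = 1 := by
  rw [pow_succ, pow_mul, one_add_four_mul_pow_two_pow h2]
  linear_combination (a + 2 ^ (n + 1) * a ^ 2) * h2

end CommRing

theorem Nat.card_units_add_card_not_isUnit (M : Type*) [Monoid M] [Finite M] :
    Nat.card Mˣ + Nat.card {x : M // ¬IsUnit x} = Nat.card M := by
  classical
  rw [← Nat.card_range_of_injective Units.val_injective, ← Nat.card_sum]
  exact Nat.card_congr (Equiv.sumCompl IsUnit)

section Group
variable {G : Type*} [Group G]

noncomputable def zmodPowersHom {n : ℕ} (g : G) (hg : g ^ n = 1) : ZMod n →+ Additive G :=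
  ZMod.lift n ⟨zmultiplesHom (Additive G) (Additive.ofMul g), by simp [← ofMul_pow, hg]⟩

theorem zmodPowersHom_natCast {n : ℕ} (g : G) (hg : g ^ n = 1) (k : ℕ) :
    zmodPowersHom g hg k = Additive.ofMul (g ^ k) := by
  rw [zmodPowersHom, ← Int.cast_natCast (R := ZMod n) k, ZMod.lift_coe]
  simp [ofMul_pow]

theorem zmodPowersHom_injective {n : ℕ} [NeZero n] {g : G} (hg : g ^ n = 1)
    (ho : orderOf g = n) : Function.Injective (zmodPowersHom g hg) := by
  rw [injective_iff_map_eq_zero]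
  intro x hx
  rw [← ZMod.natCast_zmod_val x, zmodPowersHom_natCast, ofMul_eq_zero] at hx
  have hdvd := orderOf_dvd_of_pow_eq_one hx
  rw [ho] at hdvd
  rw [← ZMod.val_eq_zero]
  exact Nat.eq_zero_of_dvd_of_lt hdvd x.val_lt

end Group

theorem AddMonoidHom.injective_of_prime_nsmul {A B : Type*} [AddGroup A] [Finite A] [AddGroup B]
    (f : A →+ B) (h : ∀ p : ℕ, p.Prime → ∀ a : A, p • a = 0 → f a = 0 → a = 0) :
    Function.Injective f := by
  rw [injective_iff_map_eq_zero]
  intro a ha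
  by_contra hne
  obtain ⟨p, hp, k, hk⟩ := Nat.exists_prime_and_dvd (AddMonoid.addOrderOf_eq_one_iff.not.mpr hne)
  have hka : k • a = 0 :=
    h p hp (k • a) (by rw [smul_smul, ← hk, addOrderOf_nsmul_eq_zero])
      (by rw [map_nsmul, ha, nsmul_zero])
  have hk0 : 0 < k := Nat.pos_of_mul_pos_left (hk ▸ addOrderOf_pos a)
  have := Nat.le_of_dvd hk0 (hk ▸ addOrderOf_dvd_of_nsmul_eq_zero hka)
  nlinarith [hp.two_le]

namespace ZMod

section PrimePower
variable {p k : ℕ} [Fact p.Prime]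

theorem isUnit_iff_castHom_ne_zero (x : ZMod (p ^ (k + 1))) :
    IsUnit x ↔ castHom (dvd_pow_self p k.succ_ne_zero) (ZMod p) x ≠ 0 := by
  rw [← natCast_zmod_val x, isUnit_natCast_iff_not_dvd_pow Fact.out k.succ_pos, map_natCast, Ne,
    natCast_eq_zero_iff]

theorem isNilpotent_of_not_isUnit {x : ZMod (p ^ (k + 1))} (hx : ¬IsUnit x) : IsNilpotent x := by
  rw [← natCast_zmod_val x, isUnit_natCast_iff_not_dvd_pow Fact.out k.succ_pos, not_not] at hx
  refine ⟨k + 1, ?_⟩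
  rw [← natCast_zmod_val x, ← Nat.cast_pow, natCast_eq_zero_iff]
  exact pow_dvd_pow_of_dvd hx _

end PrimePower

instance {k : ℕ} : Fact (1 < 2 ^ (k + 1)) := ⟨Nat.one_lt_two_pow k.succ_ne_zero⟩

theorem eq_zero_of_coprime_of_nsmul_eq_zero {n p : ℕ} (hp : p.Coprime n) {x : ZMod n}
    (hx : p • x = 0) : x = 0 := by
  rw [nsmul_eq_mul] at hx
  exact ((isUnit_iff_coprime p n).mpr hp).mul_right_eq_zero.mp hx

theorem exists_eq_two_pow_mul_of_two_nsmul_eq_zero {r : ℕ} {x : ZMod (2 ^ (r + 1))}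
    (hx : 2 • x = 0) : ∃ α < 2, x = ((2 ^ r * α : ℕ) : ZMod (2 ^ (r + 1))) := by
  replace hx : ((2 * x.val : ℕ) : ZMod (2 ^ (r + 1))) = 0 := by
    simpa [nsmul_eq_mul] using hx
  rw [natCast_eq_zero_iff] at hx
  obtain ⟨α, hα⟩ : 2 ^ r ∣ x.val :=
    Nat.dvd_of_mul_dvd_mul_left two_pos (by rwa [← pow_succ'])
  refine ⟨α, Nat.lt_of_mul_lt_mul_left (a := 2 ^ r) ?_, by rw [← hα, natCast_zmod_val]⟩
  rw [← hα, ← pow_succ]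
  exact x.val_lt

theorem two_pow_ne_zero {m k : ℕ} (h : k < m) : (2 : ZMod (2 ^ m)) ^ k ≠ 0 := by
  have : ((2 ^ k : ℕ) : ZMod (2 ^ m)) ≠ 0 := by
    rw [Ne, natCast_eq_zero_iff, Nat.pow_dvd_pow_iff_le_right one_lt_two]
    omega
  exact_mod_cast this

theorem two_pow_self_eq_zero (m : ℕ) : (2 : ZMod (2 ^ m)) ^ m = 0 := by
  exact_mod_cast natCast_self (2 ^ m)

theorem eq_zero_of_two_pow_mul_eq_zero {r α : ℕ} (hα : α < 2)
    (h : (2 : ZMod (2 ^ (r + 1))) ^ r * α = 0) : α = 0 := by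
  interval_cases α
  · rfl
  · exact absurd (by simpa using h) (two_pow_ne_zero r.lt_succ_self)

end ZMod

namespace Eisenstein

section CommRing
variable {S : Type*} [CommRing S]

local notation "ω" => AdjoinRoot.root (X ^ 2 + X + 1 : S[X])
local notation "ι" => AdjoinRoot.of (X ^ 2 + X + 1 : S[X])

theorem root_sq_add_root_add_one : ω ^ 2 + ω + 1 = 0 := by
  have h := AdjoinRoot.mk_self (f := (X ^ 2 + X + 1 : S[X]))
  rwa [map_add, map_add, map_pow, AdjoinRoot.mk_X, map_one] at h

theorem root_pow_three : ω ^ 3 = 1 := by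
  linear_combination (ω - 1) * root_sq_add_root_add_one (S := S)

theorem mul_conj_eq (a b : S) :
    (ι a + ι b * ω) * (ι (a - b) - ι b * ω) = ι (a ^ 2 - a * b + b ^ 2) := by
  simp only [map_sub, map_add, map_mul, map_pow]
  linear_combination -(ι b) ^ 2 * root_sq_add_root_add_one (S := S)

theorem monic_X_sq_add_X_add_one : (X ^ 2 + X + 1 : S[X]).Monic := by monicity!

theorem natDegree_X_sq_add_X_add_one [Nontrivial S] : (X ^ 2 + X + 1 : S[X]).natDegree = 2 := by
  compute_degree!

variable [Nontrivial S]

noncomputable def prodEquiv : S × S ≃ AdjoinRoot (X ^ 2 + X + 1 : S[X]) :=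
  (piFinTwoEquiv fun _ => S).symm.trans
    ((AdjoinRoot.powerBasis' monic_X_sq_add_X_add_one).basis.reindex
      (finCongr natDegree_X_sq_add_X_add_one)).equivFun.symm.toEquiv

theorem prodEquiv_apply (p : S × S) : prodEquiv p = ι p.1 + ι p.2 * ω := by
  simp [prodEquiv, Module.Basis.equivFun_symm_apply, Fin.sum_univ_two, Algebra.smul_def,
    AdjoinRoot.algebraMap_eq, finCongr, mul_comm]

theorem of_add_of_mul_root_inj {a b a' b' : S} :
    ι a + ι b * ω = ι a' + ι b' * ω ↔ a = a' ∧ b = b' := by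
  simpa [prodEquiv_apply] using prodEquiv.injective.eq_iff (a := (a, b)) (b := (a', b'))

theorem of_injective : Function.Injective ι :=
  fun a a' h => ((of_add_of_mul_root_inj (b := 0) (b' := 0)).mp (by rw [h])).1

instance : Nontrivial (AdjoinRoot (X ^ 2 + X + 1 : S[X])) := of_injective.nontrivial

instance [Finite S] : Finite (AdjoinRoot (X ^ 2 + X + 1 : S[X])) := Finite.of_equiv _ prodEquiv

theorem orderOf_root : orderOf ω = 3 := by
  refine orderOf_eq_prime root_pow_three fun h => one_ne_zero (α := S) ?_
  refine ((of_add_of_mul_root_inj (a := 0) (a' := 1)).mp ?_).2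
  simp [h]

end CommRing

section TwoPower
variable {k : ℕ}

local notation "S" => ZMod (2 ^ (k + 1))
local notation "R" => AdjoinRoot (X ^ 2 + X + 1 : (ZMod (2 ^ (k + 1)))[X])
local notation "ω" => AdjoinRoot.root (X ^ 2 + X + 1 : (ZMod (2 ^ (k + 1)))[X])
local notation "ι" => AdjoinRoot.of (X ^ 2 + X + 1 : (ZMod (2 ^ (k + 1)))[X])

theorem isUnit_of_add_of_mul_root_iff (a b : S) :
    IsUnit (ι a + ι b * ω) ↔ IsUnit a ∨ IsUnit b := by
  constructor
  · intro hu
    by_contra! h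
    have hnil : ι a + ι b * ω ∈ nilradical R :=
      add_mem ((ZMod.isNilpotent_of_not_isUnit h.1).map ι)
        (Ideal.mul_mem_right _ _ ((ZMod.isNilpotent_of_not_isUnit h.2).map ι))
    exact (mem_nilradical.mp hnil).not_isUnit hu
  · intro h
    have hnorm : IsUnit (a ^ 2 - a * b + b ^ 2) := by
      simp only [ZMod.isUnit_iff_castHom_ne_zero, map_add, map_sub, map_mul, map_pow] at h ⊢
      generalize ZMod.castHom _ (ZMod 2) a = x, ZMod.castHom _ (ZMod 2) b = y at h ⊢
      revert x y
      decide
    have := hnorm.map ι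
    rw [← mul_conj_eq] at this
    exact isUnit_of_mul_isUnit_left this

theorem card_units : Nat.card Rˣ = 3 * 4 ^ k := by
  have hS : Nat.card Sˣ + Nat.card {a : S // ¬IsUnit a} = 2 ^ (k + 1) := by
    rw [Nat.card_units_add_card_not_isUnit, Nat.card_zmod]
  have hR : Nat.card Rˣ + Nat.card {x : R // ¬IsUnit x} = (2 ^ (k + 1)) ^ 2 := by
    rw [Nat.card_units_add_card_not_isUnit, ← Nat.card_congr prodEquiv, Nat.card_prod,
      Nat.card_zmod, sq]
  have hunits : Nat.card Sˣ = 2 ^ k := by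
    rw [Nat.card_eq_fintype_card, ZMod.card_units_eq_totient,
      Nat.totient_prime_pow_succ Nat.prime_two]
    simp
  have hnonunits : Nat.card {x : R // ¬IsUnit x} = Nat.card {a : S // ¬IsUnit a} ^ 2 := by
    rw [pow_two (Nat.card _), ← Nat.card_prod]
    refine Nat.card_congr ((Equiv.subtypeEquiv prodEquiv fun p => ?_).symm.trans
      Equiv.subtypeProdEquivProd)
    rw [prodEquiv_apply, isUnit_of_add_of_mul_root_iff, not_or]
  have hN : Nat.card {a : S // ¬IsUnit a} = 2 ^ k := by linarith [pow_succ' 2 k]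
  have h2 : ((2 : ℕ) ^ (k + 1)) ^ 2 = 4 * (2 ^ k) ^ 2 := by ring
  rw [hnonunits, hN, h2] at hR
  rw [show (4 : ℕ) ^ k = (2 ^ k) ^ 2 by rw [← pow_mul, mul_comm, pow_mul]; norm_num]
  omega

end TwoPower

section Units
variable {n : ℕ}

-- The modulus `2 ^ m` is written as `2 ^ (n + 3)`, so that no exponent needs a subtraction.
local notation "R" => AdjoinRoot (X ^ 2 + X + 1 : (ZMod (2 ^ (n + 3)))[X])
local notation "ω" => AdjoinRoot.root (X ^ 2 + X + 1 : (ZMod (2 ^ (n + 3)))[X])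
local notation "ι" => AdjoinRoot.of (X ^ 2 + X + 1 : (ZMod (2 ^ (n + 3)))[X])

theorem two_pow_eq_zero : (2 : R) ^ (n + 3) = 0 := by
  rw [← map_ofNat ι 2, ← map_pow, ZMod.two_pow_self_eq_zero, map_zero]

theorem one_add_two_mul_root_pow_two_pow :
    (1 + 2 * ω) ^ 2 ^ (n + 1) = 1 + 2 ^ (n + 2) * (-1) := by
  have hsq : (1 + 2 * ω) ^ 2 = 1 + 4 * (-1) := by
    linear_combination 4 * root_sq_add_root_add_one (S := ZMod (2 ^ (n + 3)))
  rw [pow_succ' (2 : ℕ) n, pow_mul, hsq, one_add_four_mul_pow_two_pow two_pow_eq_zero]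

theorem one_add_two_mul_root_pow_two_pow_succ : (1 + 2 * ω) ^ 2 ^ (n + 2) = 1 := by
  rw [pow_succ (2 : ℕ) (n + 1), pow_mul, one_add_two_mul_root_pow_two_pow]
  linear_combination (-1 + 2 ^ (n + 1)) * two_pow_eq_zero

noncomputable def unitsHom :
    ZMod 3 × ZMod (2 ^ (n + 2)) × ZMod (2 ^ (n + 1)) × ZMod 2 →+ Additive Rˣ :=
  (zmodPowersHom (Units.ofPowEqOne ω 3 root_pow_three three_ne_zero)
    (Units.pow_ofPowEqOne _ _)).coprod <|
  (zmodPowersHom (Units.ofPowEqOne (1 + 2 * ω) _ one_add_two_mul_root_pow_two_pow_succ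
    (by positivity)) (Units.pow_ofPowEqOne _ _)).coprod <|
  (zmodPowersHom (Units.ofPowEqOne (1 + 4 * ω) _
    (one_add_four_mul_pow_two_pow_succ two_pow_eq_zero _) (by positivity))
    (Units.pow_ofPowEqOne _ _)).coprod <|
  zmodPowersHom (-1) neg_one_sq

theorem val_toMul_unitsHom_natCast (a b c d : ℕ) :
    ((Additive.toMul (unitsHom ((a : ZMod 3), (b : ZMod (2 ^ (n + 2))),
      (c : ZMod (2 ^ (n + 1))), (d : ZMod 2))) : Rˣ) : R) =
      ω ^ a * ((1 + 2 * ω) ^ b * ((1 + 4 * ω) ^ c * (-1) ^ d)) := by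
  simp only [unitsHom, AddMonoidHom.coprod_apply, zmodPowersHom_natCast, toMul_add, toMul_ofMul,
    Units.val_mul, Units.val_pow_eq_pow_val, Units.val_ofPowEqOne, Units.val_neg, Units.val_one]

theorem eq_zero_of_two_torsion_eq_one {α β γ : ℕ} (hα : α < 2) (hβ : β < 2) (hγ : γ < 2)
    (h : (1 + 2 * ω) ^ (2 ^ (n + 1) * α) * ((1 + 4 * ω) ^ (2 ^ n * β) * (-1) ^ γ) = 1) :
    α = 0 ∧ β = 0 ∧ γ = 0 := by
  have hT2 : (2 : R) ^ (n + 2) * 2 ^ (n + 2) = 0 := by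
    linear_combination 2 ^ (n + 1) * two_pow_eq_zero
  simp only [pow_mul, one_add_two_mul_root_pow_two_pow,
    one_add_four_mul_pow_two_pow two_pow_eq_zero,
    one_add_pow_eq_of_sq_eq_zero (x := (2 : R) ^ (n + 2) * -1) (by linear_combination hT2),
    one_add_pow_eq_of_sq_eq_zero (x := 2 ^ (n + 2) * ω) (by linear_combination ω ^ 2 * hT2)] at h
  obtain ⟨e1, e2⟩ := of_add_of_mul_root_inj.mp (show
      ι ((-1) ^ γ * (1 - 2 ^ (n + 2) * α)) + ι ((-1) ^ γ * (2 ^ (n + 2) * β)) * ω = ι 1 + ι 0 * ω by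
    simp only [map_mul, map_pow, map_neg, map_one, map_sub, map_natCast, map_zero, map_ofNat]
    linear_combination h + (-1) ^ γ * α * β * ω * hT2)
  have h2 := ZMod.two_pow_self_eq_zero (n + 3)
  obtain rfl : γ = 0 := by
    interval_cases γ
    · rfl
    -- `-(1 - 2 ^ (n + 2) * α) = 1` would give `4 = 0`.
    · exact absurd (by linear_combination (-2) * e1 + α * h2)
        (ZMod.two_pow_ne_zero (show 2 < n + 3 by omega))
  rw [pow_zero, one_mul] at e1 e2
  exact ⟨ZMod.eq_zero_of_two_pow_mul_eq_zero hα (by linear_combination -e1),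
    ZMod.eq_zero_of_two_pow_mul_eq_zero hβ e2, rfl⟩

theorem unitsHom_injective : Function.Injective (unitsHom (n := n)) := by
  refine AddMonoidHom.injective_of_prime_nsmul _ fun p hp ⟨i, j, k, l⟩ hx hχ => ?_
  simp only [Prod.smul_mk, Prod.mk_eq_zero] at hx
  obtain ⟨hi, hj, hk, hl⟩ := hx
  by_cases hp2 : p = 2
  · subst hp2
    obtain rfl : i = ((0 : ℕ) : ZMod 3) := by
      rw [Nat.cast_zero]
      exact ZMod.eq_zero_of_coprime_of_nsmul_eq_zero (by norm_num) hi
    obtain ⟨α, hα, rfl⟩ := ZMod.exists_eq_two_pow_mul_of_two_nsmul_eq_zero hj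
    obtain ⟨β, hβ, rfl⟩ := ZMod.exists_eq_two_pow_mul_of_two_nsmul_eq_zero hk
    obtain ⟨γ, hγ, rfl⟩ : ∃ γ : ℕ, γ < 2 ∧ l = γ :=
      ⟨l.val, l.val_lt, (ZMod.natCast_zmod_val l).symm⟩
    have h := congrArg (fun x => ((Additive.toMul x : Rˣ) : R)) hχ
    simp only [val_toMul_unitsHom_natCast, pow_zero, one_mul, toMul_zero, Units.val_one] at h
    obtain ⟨rfl, rfl, rfl⟩ := eq_zero_of_two_torsion_eq_one hα hβ hγ h
    simp
  · have hcop : p.Coprime 2 := (Nat.coprime_primes hp Nat.prime_two).mpr hp2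
    obtain rfl := ZMod.eq_zero_of_coprime_of_nsmul_eq_zero (hcop.pow_right _) hj
    obtain rfl := ZMod.eq_zero_of_coprime_of_nsmul_eq_zero (hcop.pow_right _) hk
    obtain rfl := ZMod.eq_zero_of_coprime_of_nsmul_eq_zero hcop hl
    have hζ : orderOf (Units.ofPowEqOne ω 3 root_pow_three three_ne_zero) = 3 := by
      rw [← orderOf_units, Units.val_ofPowEqOne, orderOf_root]
    obtain rfl := zmodPowersHom_injective _ hζ
      (by simpa [unitsHom] using hχ : _ = zmodPowersHom _ _ 0)
    rfl

end Units

end Eisenstein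

open Eisenstein in
theorem eisenstein_units_two_pow (m : ℕ) (hm : 3 ≤ m) :
    Nonempty ((EisensteinMod (2 ^ m))ˣ ≃*
      Multiplicative
        (ZMod 3 × ZMod (2 ^ (m - 1)) × ZMod (2 ^ (m - 2)) × ZMod 2)) := by
  obtain ⟨n, rfl⟩ : ∃ n, m = n + 3 := ⟨m - 3, by omega⟩
  have hcard : Nat.card (ZMod 3 × ZMod (2 ^ (n + 2)) × ZMod (2 ^ (n + 1)) × ZMod 2) =
      Nat.card (Additive (AdjoinRoot (X ^ 2 + X + 1 : (ZMod (2 ^ (n + 3)))[X]))ˣ) := by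
    rw [Nat.card_congr Additive.toMul, card_units (k := n + 2)]
    simp only [Nat.card_prod, Nat.card_zmod]
    rw [show (4 : ℕ) ^ (n + 2) = 2 ^ (n + 2) * 2 ^ (n + 2) by rw [← mul_pow]; norm_num]
    ring
  have hbij := (Nat.bijective_iff_injective_and_card _).mpr ⟨unitsHom_injective, hcard⟩
  exact ⟨(AddEquiv.toMultiplicativeLeft (AddEquiv.ofBijective unitsHom hbij)).symm⟩
end

section
/- Let k ≥ 1 and σ = 2^k. In the ring Z_{2^{k+2}}[x]/(x^σ − 1), the element (1 + 2x)^{2^{k+1}} equals 1, but (1 + 2x)^{2^k} equals 1 + 2^{k+1}x + 2^{k+1}x² ≠ 1. Hence the multiplicative order of 1+2x in this ring is 2^{k+1}. -/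
/-!
Squaring `1 + 2^(m+2) u + 2^(m+3) r` doubles the middle term and leaves the rest divisible by
`2^(m+4)`, so by induction `(1 + 2a)^(2^(m+1)) ≡ 1 + 2^(m+2)(a + a²)` modulo `2^(m+3)`. Hence modulo
`2^(k+2)` we get `(1 + 2x)^(2^k) = 1 + 2^(k+1)(x + x²)`, whose square is `1`. It is not `1` modulo
`x^(2^k) - 1`: already modulo `x² - 1` the difference reduces to `2^(k+1)(x + 1)`, which is nonzero of
degree below `2`.
-/

open Polynomial

section CommRing

variable {R : Type*} [CommRing R]

theorem exists_one_add_two_mul_pow_two_pow (a : R) (m : ℕ) :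
    ∃ r : R, (1 + 2 * a) ^ 2 ^ (m + 1) = 1 + 2 ^ (m + 2) * (a + a ^ 2) + 2 ^ (m + 3) * r := by
  induction m with
  | zero => exact ⟨0, by ring⟩
  | succ m ih =>
    obtain ⟨r, hr⟩ := ih
    refine ⟨r + 2 ^ m * (a + a ^ 2) ^ 2 + 2 ^ (m + 2) * ((a + a ^ 2) * r + r ^ 2), ?_⟩
    rw [pow_succ 2 (m + 1), pow_mul, hr]
    ring

theorem one_add_two_mul_pow_two_pow {k : ℕ} (hk : 1 ≤ k) (h2 : (2 : R) ^ (k + 2) = 0) (a : R) :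
    (1 + 2 * a) ^ 2 ^ k = 1 + 2 ^ (k + 1) * (a + a ^ 2) := by
  obtain ⟨m, rfl⟩ := Nat.exists_eq_add_of_le' hk
  obtain ⟨r, hr⟩ := exists_one_add_two_mul_pow_two_pow a m
  rw [hr]
  linear_combination r * h2

theorem one_add_two_mul_pow_two_pow_succ {k : ℕ} (hk : 1 ≤ k) (h2 : (2 : R) ^ (k + 2) = 0)
    (a : R) : (1 + 2 * a) ^ 2 ^ (k + 1) = 1 := by
  rw [pow_succ, pow_mul, one_add_two_mul_pow_two_pow hk h2]
  linear_combination (a + a ^ 2 + 2 ^ k * (a + a ^ 2) ^ 2) * h2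

theorem X_pow_sub_one_not_dvd_C_mul_X_add_X_sq {c : R} (hc : c ≠ 0) {n : ℕ} (hn : Even n) :
    ¬ (X ^ n - 1 : R[X]) ∣ C c * (X + X ^ 2) := by
  nontriviality R
  obtain ⟨m, rfl⟩ := hn.two_dvd
  have hsq : (X ^ 2 - 1 : R[X]) ∣ X ^ (2 * m) - 1 := by
    rw [pow_mul]
    exact sub_one_dvd_pow_sub_one _ m
  have hlin : C c * (X + X ^ 2) = C c * (X + 1) + C c * (X ^ 2 - 1) := by ring
  intro hdvd
  have hdvd' : (X ^ 2 - C 1 : R[X]) ∣ C c * (X + 1) := by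
    rw [C_1]
    exact (dvd_add_left (dvd_mul_left _ _)).mp (hlin ▸ hsq.trans hdvd)
  refine (monic_X_pow_sub_C (1 : R) two_ne_zero).not_dvd_of_natDegree_lt ?_ ?_ hdvd'
  · exact fun h ↦ hc (by simpa using congrArg (coeff · 0) h)
  · rw [natDegree_X_pow_sub_C]
    exact (natDegree_C_mul_le _ _).trans_lt (by rw [← C_1, natDegree_X_add_C]; norm_num)

end CommRing

theorem ZMod.two_pow_ne_zero_s14 {m n : ℕ} (h : m < n) : (2 : ZMod (2 ^ n)) ^ m ≠ 0 := by
  have : ((2 ^ m : ℕ) : ZMod (2 ^ n)) ≠ 0 := by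
    rw [Ne, ZMod.natCast_eq_zero_iff, Nat.pow_dvd_pow_iff_le_right one_lt_two]
    omega
  exact_mod_cast this

theorem ZMod.two_pow_self (n : ℕ) : (2 : ZMod (2 ^ n)) ^ n = 0 := by
  exact_mod_cast ZMod.natCast_self (2 ^ n)

theorem order_one_add_two_x (k : ℕ) (hk : 1 ≤ k) :
    (Ideal.Quotient.mk
        (Ideal.span {(X ^ (2 ^ k) - 1 : Polynomial (ZMod (2 ^ (k + 2))))})
        (1 + 2 * X)) ^ (2 ^ (k + 1)) = 1 ∧
    (Ideal.Quotient.mk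
        (Ideal.span {(X ^ (2 ^ k) - 1 : Polynomial (ZMod (2 ^ (k + 2))))})
        (1 + 2 * X)) ^ (2 ^ k) =
      Ideal.Quotient.mk _ (1 + C ((2 : ZMod (2 ^ (k + 2))) ^ (k + 1)) * X
        + C ((2 : ZMod (2 ^ (k + 2))) ^ (k + 1)) * X ^ 2) ∧
    (Ideal.Quotient.mk
        (Ideal.span {(X ^ (2 ^ k) - 1 : Polynomial (ZMod (2 ^ (k + 2))))})
        (1 + 2 * X)) ^ (2 ^ k) ≠ 1 ∧
    orderOf (Ideal.Quotient.mk
        (Ideal.span {(X ^ (2 ^ k) - 1 : Polynomial (ZMod (2 ^ (k + 2))))})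
        (1 + 2 * X)) = 2 ^ (k + 1) := by
  set mk := Ideal.Quotient.mk (Ideal.span {(X ^ (2 ^ k) - 1 : Polynomial (ZMod (2 ^ (k + 2))))})
  have h2 : (2 : (ZMod (2 ^ (k + 2)))[X]) ^ (k + 2) = 0 := by
    rw [← C_ofNat, ← C_pow, ZMod.two_pow_self, C_0]
  have hpow : (1 + 2 * X : (ZMod (2 ^ (k + 2)))[X]) ^ 2 ^ k =
      1 + C (2 ^ (k + 1)) * X + C (2 ^ (k + 1)) * X ^ 2 := by
    rw [one_add_two_mul_pow_two_pow hk h2, C_pow, C_ofNat]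
    ring
  have hsq : mk (1 + 2 * X) ^ 2 ^ (k + 1) = 1 := by
    rw [← map_pow, one_add_two_mul_pow_two_pow_succ hk h2, map_one]
  have hne : mk (1 + 2 * X) ^ 2 ^ k ≠ 1 := by
    rw [← map_pow, ← map_one mk, Ne, Ideal.Quotient.eq, Ideal.mem_span_singleton, hpow]
    rw [show 1 + C (2 ^ (k + 1)) * X + C (2 ^ (k + 1)) * X ^ 2 - 1 =
      C ((2 : ZMod (2 ^ (k + 2))) ^ (k + 1)) * (X + X ^ 2) by ring]
    exact X_pow_sub_one_not_dvd_C_mul_X_add_X_sq (ZMod.two_pow_ne_zero_s14 (by omega))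
      (Nat.even_pow.mpr ⟨even_two, by omega⟩)
  exact ⟨hsq, by rw [← map_pow, hpow], hne, orderOf_eq_prime_pow hne hsq⟩
end

section
/- Let k ≥ 1, σ = 2^k, m ≤ k+1, and let a, b ∈ Z_{2^m} with a odd and b even. Then (a + bx)^{2^k} = 1 in Z_{2^m}[x]/(x^σ − 1). -/
open Polynomial

/-! Writing `a = 2s + 1` and `b = 2t`, the element is `1 + 2y` with `y = s + t x`, and squaring
`1 + 2^(j+1) e` gives `1 + 2^(j+2) (e + 2^j e²)`; hence `(1 + 2y)^(2^k) ∈ 1 + 2^(k+1) R`,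
which is `1` once `2^(k+1) = 0`, as it is over `ℤ/2^m` with `m ≤ k + 1`. -/

theorem exists_one_add_two_mul_pow_two_pow_s15 {R : Type*} [CommRing R] (n : ℕ) (y : R) :
    ∃ e : R, (1 + 2 * y) ^ 2 ^ n = 1 + 2 ^ (n + 1) * e := by
  induction n with
  | zero => exact ⟨y, by ring⟩
  | succ n ih =>
    obtain ⟨e, he⟩ := ih
    exact ⟨e + 2 ^ n * e ^ 2, by rw [pow_succ, pow_mul, he]; ring⟩

theorem one_add_two_mul_pow_two_pow_eq_one {R : Type*} [CommRing R] {n : ℕ}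
    (h : (2 : R) ^ (n + 1) = 0) (y : R) : (1 + 2 * y) ^ 2 ^ n = 1 := by
  obtain ⟨e, he⟩ := exists_one_add_two_mul_pow_two_pow_s15 n y
  rw [he, h, zero_mul, add_zero]

theorem two_pow_eq_zero_of_ringHom {R : Type*} [Semiring R] {m : ℕ}
    (f : ZMod (2 ^ m) →+* R) : (2 : R) ^ m = 0 := by
  have h := congrArg f (ZMod.natCast_self (2 ^ m))
  rwa [map_natCast, map_zero, Nat.cast_pow, Nat.cast_ofNat] at h

theorem odd_even_pow_eq_one_general (k m a b : ℕ) (hm : m ≤ k + 1)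
    (ha : Odd a) (hb : Even b) :
    (Ideal.Quotient.mk
        (Ideal.span {(X ^ (2 ^ k) - 1 : Polynomial (ZMod (2 ^ m)))})
        (C (a : ZMod (2 ^ m)) + C (b : ZMod (2 ^ m)) * X)) ^ (2 ^ k) = 1 := by
  set mk := Ideal.Quotient.mk (Ideal.span {(X ^ (2 ^ k) - 1 : Polynomial (ZMod (2 ^ m)))})
  obtain ⟨s, rfl⟩ := ha
  obtain ⟨t, rfl⟩ := hb
  have hform : mk (C ((2 * s + 1 : ℕ) : ZMod (2 ^ m)) + C ((t + t : ℕ) : ZMod (2 ^ m)) * X)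
      = 1 + 2 * mk (C (s : ZMod (2 ^ m)) + C (t : ZMod (2 ^ m)) * X) := by
    push_cast
    simp only [map_add, map_mul, map_one, map_ofNat]
    ring
  have h2 : (2 : (ZMod (2 ^ m))[X] ⧸ _) ^ (k + 1) = 0 :=
    pow_eq_zero_of_le hm (two_pow_eq_zero_of_ringHom (mk.comp C))
  rw [hform, one_add_two_mul_pow_two_pow_eq_one h2]

theorem odd_even_pow_eq_one (k m a b : ℕ) (hk : 1 ≤ k) (hm : m ≤ k + 1)
    (ha : Odd a) (hb : Even b) :
    (Ideal.Quotient.mk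
        (Ideal.span {(X ^ (2 ^ k) - 1 : Polynomial (ZMod (2 ^ m)))})
        (C (a : ZMod (2 ^ m)) + C (b : ZMod (2 ^ m)) * X)) ^ (2 ^ k) = 1 :=
  odd_even_pow_eq_one_general k m a b hm ha hb
end
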